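/- If w ∈ F(X) is quasi-positive with |Θ(w)| = k (sum of coordinates of the abelianization), then w admits a factorization w = x_{i_1}^{c_1}⋯x_{i_k}^{c_k} in which each conjugator satisfies |c_j| ≤ (|w| − k)/2, where |w| denotes the length of the reduced word w. -/

import Mathlib

/-!
Mark `k` occurrences of positive letters in a word so that the unmarked letters spell the
identity. Reading the word from left to right, the marks give a factorization into conjugates
`c⁻¹ x c` in which `c⁻¹` is the product of the unmarked letters before the mark; since all
unmarked letters cancel, `c` is also the product of those after it, so `2 |c|` is at most the
number `|w| - k` of unmarked letters. A product of `k` conjugates of generators, written out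
letter by letter, carries such a marking, and free reduction preserves its existence: cancelling
two unmarked letters is harmless, and when a marked `x` cancels against an unmarked `x⁻¹`, the
remaining unmarked letters spell a conjugate of `x`, in which one further `x` can be marked,
because the reduced word of a conjugate of `x` has the form `G⁻¹ x G`.
-/

/-- Quasi-positive: a (possibly empty) product of conjugates of generators. -/
def QuasiPositive {X : Type*} (w : FreeGroup X) : Prop :=
  ∃ l : List (X × FreeGroup X),
    w = (l.map fun p => p.2⁻¹ * FreeGroup.of p.1 * p.2).prod

/-- The abelianization map `Θ : F(X) → ℤ^X`. -/
noncomputable def Theta {X : Type*} [DecidableEq X] :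
    FreeGroup X →* Multiplicative (X → ℤ) :=
  FreeGroup.lift fun x => Multiplicative.ofAdd (Pi.single x 1)

namespace FreeGroup

variable {α : Type*}

lemma mk_append (L₁ L₂ : List (α × Bool)) : mk (L₁ ++ L₂) = mk L₁ * mk L₂ := mul_mk.symm

lemma mk_cons (a : α × Bool) (L : List (α × Bool)) : mk (a :: L) = mk [a] * mk L := rfl

lemma mk_cons_true (x : α) (L : List (α × Bool)) : mk ((x, true) :: L) = of x * mk L :=
  rfl

lemma mk_cons_false (x : α) (L : List (α × Bool)) :
    mk ((x, false) :: L) = (of x)⁻¹ * mk L :=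
  rfl

lemma IsReduced.invRev {L : List (α × Bool)} (h : IsReduced L) : IsReduced (invRev L) := by
  classical
  exact isReduced_iff_reduce_eq.2 (by rw [reduce_invRev, h.reduce_eq])

lemma exists_isReduced_conj_eq (x : α) : ∀ G : List (α × Bool), IsReduced G →
    ∃ G', IsReduced (invRev G' ++ (x, true) :: G') ∧
      mk (invRev G' ++ (x, true) :: G') = (mk G)⁻¹ * of x * mk G
  | [], _ => ⟨[], IsReduced.singleton, by simp [invRev, ← one_eq_mk]; rfl⟩
  | (y, b) :: T, hG => by
    by_cases hyx : y = x
    · obtain ⟨G', hG', hmk⟩ :=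
        exists_isReduced_conj_eq x T (hG.infix (List.suffix_cons _ _).isInfix)
      refine ⟨G', hG', ?_⟩
      subst hyx
      rw [hmk]
      cases b
      · rw [mk_cons_false]; group
      · rw [mk_cons_true]; group
    · refine ⟨(y, b) :: T, ?_, ?_⟩
      · have hcons : ∀ c, IsReduced ((x, c) :: (y, b) :: T) := fun c =>
          isReduced_cons_cons.2 ⟨fun h => absurd h.symm hyx, hG⟩
        have hleft := (hcons false).invRev
        rw [invRev_cons] at hleft
        simpa using IsReduced.append_overlap (L₂ := [(x, true)]) hleft (hcons true) (by simp)
      · rw [mk_append, ← inv_mk, mk_cons_true]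
        group

/-- A word in which some occurrences of positive letters are marked: `inl a` is an ordinary
letter, `inr x` a marked occurrence of `(x, true)`. -/
abbrev MarkedWord (α : Type*) := List (α × Bool ⊕ α)

namespace MarkedWord

def word (M : MarkedWord α) : List (α × Bool) := M.map (Sum.elim id fun x => (x, true))

def unmarked (M : MarkedWord α) : List (α × Bool) := M.filterMap Sum.getLeft?

def marks (M : MarkedWord α) : List α := M.filterMap Sum.getRight?

variable (a : α × Bool) (x : α) (M N : MarkedWord α)

@[simp] lemma word_nil : word ([] : MarkedWord α) = [] := rfl
@[simp] lemma unmarked_nil : unmarked ([] : MarkedWord α) = [] := rfl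
@[simp] lemma marks_nil : marks ([] : MarkedWord α) = [] := rfl
@[simp] lemma word_inl_cons : word (.inl a :: M) = a :: word M := rfl
@[simp] lemma unmarked_inl_cons : unmarked (.inl a :: M) = a :: unmarked M := rfl
@[simp] lemma marks_inl_cons : marks (.inl a :: M) = marks M := rfl
@[simp] lemma word_inr_cons : word (.inr x :: M) = (x, true) :: word M := rfl
@[simp] lemma unmarked_inr_cons : unmarked (.inr x :: M) = unmarked M := rfl
@[simp] lemma marks_inr_cons : marks (.inr x :: M) = x :: marks M := rfl
@[simp] lemma word_append : word (M ++ N) = word M ++ word N := List.map_append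
@[simp] lemma unmarked_append : unmarked (M ++ N) = unmarked M ++ unmarked N :=
  List.filterMap_append
@[simp] lemma marks_append : marks (M ++ N) = marks M ++ marks N := List.filterMap_append

@[simp] lemma word_map_inl (L : List (α × Bool)) : word (L.map .inl) = L := by
  induction L <;> simp [*]
@[simp] lemma unmarked_map_inl (L : List (α × Bool)) : unmarked (L.map .inl) = L := by
  induction L <;> simp [*]
@[simp] lemma marks_map_inl (L : List (α × Bool)) : marks (L.map .inl) = [] := by
  induction L <;> simp [*]

lemma word_eq_append_iff {M : MarkedWord α} {L₁ L₂ : List (α × Bool)} :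
    word M = L₁ ++ L₂ ↔ ∃ M₁ M₂, M = M₁ ++ M₂ ∧ word M₁ = L₁ ∧ word M₂ = L₂ :=
  List.map_eq_append_iff

lemma word_eq_cons_iff {a : α × Bool} {M : MarkedWord α} {L : List (α × Bool)} :
    word M = a :: L ↔
      ∃ m M', M = m :: M' ∧ Sum.elim id (fun x => (x, true)) m = a ∧ word M' = L :=
  List.map_eq_cons_iff

lemma length_unmarked_add_length_marks :
    (unmarked M).length + (marks M).length = (word M).length := by
  induction M with
  | nil => rfl
  | cons m M ih => cases m <;> (simp; omega)

/-- Marking, in `M`, the unmarked letters that are marked in `N`. -/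
lemma exists_refine : ∀ (M N : MarkedWord α), word N = unmarked M →
    ∃ M', word M' = word M ∧ unmarked M' = unmarked N ∧
      (marks M').length = (marks M).length + (marks N).length
  | [], N, hN => by
    obtain rfl : N = [] := List.map_eq_nil_iff.1 hN
    exact ⟨[], rfl, rfl, rfl⟩
  | .inr x :: M, N, hN => by
    obtain ⟨M', hw, hu, hm⟩ := exists_refine M N hN
    exact ⟨.inr x :: M', by simp [hw], hu, by simp [hm]; omega⟩
  | .inl a :: M, N, hN => by
    obtain ⟨n, N, rfl, hn, hN⟩ := List.map_eq_cons_iff.1 hN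
    obtain ⟨M', hw, hu, hm⟩ := exists_refine M N hN
    cases n with
    | inl b => exact ⟨.inl b :: M', by simp_all, by simp [hu], by simp [hm]⟩
    | inr y => exact ⟨.inr y :: M', by simp_all, by simp [hu], by simp [hm]; omega⟩

end MarkedWord

open MarkedWord

def TrivialAfterDeletion (L : List (α × Bool)) (k : ℕ) : Prop :=
  ∃ M : MarkedWord α, word M = L ∧ (marks M).length = k ∧ mk (unmarked M) = 1

namespace TrivialAfterDeletion

variable {L L' L₁ L₂ : List (α × Bool)} {k k₁ k₂ : ℕ}

lemma append (h₁ : TrivialAfterDeletion L₁ k₁) (h₂ : TrivialAfterDeletion L₂ k₂) :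
    TrivialAfterDeletion (L₁ ++ L₂) (k₁ + k₂) := by
  obtain ⟨M₁, rfl, rfl, h₁⟩ := h₁
  obtain ⟨M₂, rfl, rfl, h₂⟩ := h₂
  exact ⟨M₁ ++ M₂, by simp, by simp, by rw [unmarked_append, ← mul_mk, h₁, h₂, one_mul]⟩

lemma of_unmarked {M : MarkedWord α} (h : TrivialAfterDeletion (unmarked M) k) :
    TrivialAfterDeletion (word M) ((marks M).length + k) := by
  obtain ⟨N, hN, rfl, h⟩ := h
  obtain ⟨M', hw, hu, hm⟩ := exists_refine M N hN
  exact ⟨M', hw, hm, hu ▸ h⟩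

lemma of_step (h : Red.Step L L') (h' : TrivialAfterDeletion L' k) :
    TrivialAfterDeletion L k := by
  obtain @⟨L₁, L₂, x, b⟩ := h
  obtain ⟨M, hM, rfl, h'⟩ := h'
  obtain ⟨M₁, M₂, rfl, rfl, rfl⟩ := word_eq_append_iff.1 hM
  refine ⟨M₁ ++ .inl (x, b) :: .inl (x, !b) :: M₂, by simp, by simp, ?_⟩
  rw [← h', unmarked_append, unmarked_append]
  exact Quot.sound Red.Step.not

lemma of_red (h : Red L L') (h' : TrivialAfterDeletion L' k) : TrivialAfterDeletion L k := by
  induction h using Relation.ReflTransGen.head_induction_on with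
  | refl => exact h'
  | head hs _ ih => exact of_step hs ih

lemma invRev_append_cons (G : List (α × Bool)) (x : α) :
    TrivialAfterDeletion (invRev G ++ (x, true) :: G) 1 :=
  ⟨(invRev G).map .inl ++ .inr x :: G.map .inl, by simp, by simp, by
    rw [unmarked_append, unmarked_inr_cons, unmarked_map_inl, unmarked_map_inl, mk_append, ← inv_mk,
      inv_mul_cancel]⟩

lemma of_mk_eq_conj {g : FreeGroup α} {x : α} (h : mk L = g⁻¹ * of x * g) :
    TrivialAfterDeletion L 1 := by
  classical
  obtain ⟨G, hred, hG⟩ := exists_isReduced_conj_eq x g.toWord isReduced_toWord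
  rw [mk_toWord, ← h] at hG
  obtain ⟨L₀, hL, hG₀⟩ := Red.exact.1 hG.symm
  rw [hred.red_iff_eq.1 hG₀] at hL
  exact of_red hL (invRev_append_cons G x)

/-- The situation after a marked `x` has cancelled against an unmarked `x⁻¹`: the unmarked
letters left over spell a conjugate of `x`. -/
lemma of_cancel_marked {M₁ M₂ : MarkedWord α} {x : α}
    (h : mk (unmarked M₁ ++ (x, false) :: unmarked M₂) = 1) :
    TrivialAfterDeletion (word M₁ ++ word M₂) (marks (M₁ ++ .inr x :: M₂)).length := by
  rw [mk_append, mk_cons_false] at h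
  have h₂ : mk (unmarked M₂) = of x * (mk (unmarked M₁))⁻¹ := by
    rw [← mul_one (of x * _), ← h]
    group
  have hconj : TrivialAfterDeletion (unmarked (M₁ ++ M₂)) 1 := by
    refine of_mk_eq_conj (g := (mk (unmarked M₁))⁻¹) (x := x) ?_
    rw [unmarked_append, mk_append, h₂]
    group
  convert of_unmarked hconj using 1
  · simp
  · simp; omega

lemma step (h : Red.Step L L') (h' : TrivialAfterDeletion L k) :
    TrivialAfterDeletion L' k := by
  obtain @⟨L₁, L₂, x, b⟩ := h
  obtain ⟨M, hM, rfl, h'⟩ := h'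
  obtain ⟨M₁, M', rfl, rfl, hM'⟩ := word_eq_append_iff.1 hM
  obtain ⟨m₁, M'', rfl, hm₁, hM''⟩ := word_eq_cons_iff.1 hM'
  obtain ⟨m₂, M₂, rfl, hm₂, rfl⟩ := word_eq_cons_iff.1 hM''
  clear hM hM' hM''
  rw [unmarked_append] at h'
  rcases m₁ with a₁ | y₁ <;> rcases m₂ with a₂ | y₂ <;>
    simp only [Sum.elim_inl, Sum.elim_inr, id, Prod.mk.injEq] at hm₁ hm₂
  · subst hm₁ hm₂
    refine ⟨M₁ ++ M₂, by simp, by simp, ?_⟩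
    rw [← h', unmarked_append]
    exact (Quot.sound Red.Step.not).symm
  · obtain ⟨rfl, hb⟩ := hm₂
    obtain rfl : b = false := by revert hb; cases b <;> decide
    subst hm₁
    rw [unmarked_inl_cons, unmarked_inr_cons] at h'
    simpa using of_cancel_marked h'
  · obtain ⟨rfl, rfl⟩ := hm₁
    subst hm₂
    rw [unmarked_inr_cons, unmarked_inl_cons, Bool.not_true] at h'
    simpa using of_cancel_marked h'
  · obtain ⟨-, rfl⟩ := hm₁
    simp at hm₂

lemma red (h : Red L L') (h' : TrivialAfterDeletion L k) : TrivialAfterDeletion L' k := by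
  induction h with
  | refl => exact h'
  | tail _ hs ih => exact ih.step hs

lemma toWord_prod_conj [DecidableEq α] (l : List (α × FreeGroup α)) :
    TrivialAfterDeletion (l.map fun p => p.2⁻¹ * of p.1 * p.2).prod.toWord l.length := by
  induction l with
  | nil => exact ⟨[], rfl, rfl, rfl⟩
  | cons p l ih =>
    rw [List.map_cons, List.prod_cons, toWord_mul, List.length_cons, add_comm]
    exact ((of_mk_eq_conj mk_toWord).append ih).red reduce.red

end TrivialAfterDeletion

namespace MarkedWord

/-- Each mark `x` of `M` contributes the factor `c⁻¹ x c`, encoded as `(x, c)`, where `c⁻¹` is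
`p` times the unmarked letters before the mark. -/
def factorization : FreeGroup α → MarkedWord α → List (α × FreeGroup α)
  | _, [] => []
  | p, .inl a :: M => factorization (p * mk [a]) M
  | p, .inr x :: M => (x, p⁻¹) :: factorization p M

lemma length_factorization (p : FreeGroup α) (M : MarkedWord α) :
    (factorization p M).length = (marks M).length := by
  induction M generalizing p with
  | nil => rfl
  | cons m M ih => cases m <;> simp [factorization, ih]

lemma prod_factorization (p : FreeGroup α) (M : MarkedWord α) :
    ((factorization p M).map fun q => q.2⁻¹ * of q.1 * q.2).prod =
      p * mk (word M) * (mk (unmarked M))⁻¹ * p⁻¹ := by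
  induction M generalizing p with
  | nil => simp [factorization, ← one_eq_mk]
  | cons m M ih =>
    cases m with
    | inl a =>
      rw [factorization, ih, word_inl_cons, unmarked_inl_cons, mk_cons a (word M),
        mk_cons a (unmarked M)]
      group
    | inr x =>
      rw [factorization, List.map_cons, List.prod_cons, ih, word_inr_cons, unmarked_inr_cons,
        mk_cons_true]
      group

lemma exists_of_mem_factorization {p : FreeGroup α} {M : MarkedWord α} {q : α × FreeGroup α}
    (hq : q ∈ factorization p M) :
    ∃ M₁ M₂, M = M₁ ++ .inr q.1 :: M₂ ∧ q.2 = (p * mk (unmarked M₁))⁻¹ := by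
  induction M generalizing p with
  | nil => simp [factorization] at hq
  | cons m M ih =>
    cases m with
    | inl a =>
      obtain ⟨M₁, M₂, rfl, hc⟩ := ih hq
      refine ⟨.inl a :: M₁, M₂, rfl, ?_⟩
      rw [hc, unmarked_inl_cons, mk_cons a (unmarked M₁), mul_assoc]
    | inr x =>
      rcases List.mem_cons.1 hq with rfl | hq
      · exact ⟨[], M, rfl, by simp [← one_eq_mk]⟩
      · obtain ⟨M₁, M₂, rfl, hc⟩ := ih hq
        exact ⟨.inr x :: M₁, M₂, rfl, hc⟩

lemma two_mul_norm_le [DecidableEq α] {M : MarkedWord α} (hM : mk (unmarked M) = 1)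
    {q : α × FreeGroup α} (hq : q ∈ factorization 1 M) : 2 * norm q.2 ≤ (unmarked M).length := by
  obtain ⟨M₁, M₂, rfl, hc⟩ := exists_of_mem_factorization hq
  rw [one_mul] at hc
  rw [unmarked_append, unmarked_inr_cons, mk_append] at hM
  have h₁ : norm q.2 ≤ (unmarked M₁).length := by rw [hc, norm_inv_eq]; exact norm_mk_le
  have h₂ : norm q.2 ≤ (unmarked M₂).length := by
    rw [hc, inv_eq_of_mul_eq_one_right hM]; exact norm_mk_le
  simp only [unmarked_append, unmarked_inr_cons, List.length_append]
  omega

end MarkedWord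

end FreeGroup

lemma sum_toAdd_theta_prod_conj {α : Type*} [Fintype α] [DecidableEq α]
    (l : List (α × FreeGroup α)) :
    ∑ x, Multiplicative.toAdd (Theta (l.map fun p => p.2⁻¹ * FreeGroup.of p.1 * p.2).prod) x =
      l.length := by
  induction l with
  | nil => simp
  | cons p l ih =>
    have hconj :
        Theta (p.2⁻¹ * FreeGroup.of p.1 * p.2) = Multiplicative.ofAdd (Pi.single p.1 1) := by
      rw [map_mul, map_mul, map_inv, mul_comm, mul_inv_cancel_left]
      exact FreeGroup.lift_apply_of
    rw [List.map_cons, List.prod_cons, map_mul, hconj, toAdd_mul, toAdd_ofAdd]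
    simp only [Pi.add_apply, Finset.sum_add_distrib, Finset.sum_pi_single', Finset.mem_univ,
      if_true, ih, List.length_cons]
    push_cast
    ring

theorem quasiPositive_bounded_conjugators {X : Type*} [Fintype X] [DecidableEq X]
    (w : FreeGroup X) (hw : QuasiPositive w) :
    ∃ l : List (X × FreeGroup X),
      (l.length : ℤ) = ∑ x : X, Multiplicative.toAdd (Theta w) x ∧
      w = (l.map fun p => p.2⁻¹ * FreeGroup.of p.1 * p.2).prod ∧
      ∀ p ∈ l, 2 * (FreeGroup.norm p.2 : ℤ) ≤ (FreeGroup.norm w : ℤ) - l.length := by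
  obtain ⟨l₀, hl₀⟩ := hw
  obtain ⟨M, hword, hmarks, hM⟩ := hl₀ ▸ FreeGroup.TrivialAfterDeletion.toWord_prod_conj l₀
  refine ⟨FreeGroup.MarkedWord.factorization 1 M, ?_, ?_, fun q hq => ?_⟩
  · rw [hl₀, sum_toAdd_theta_prod_conj, FreeGroup.MarkedWord.length_factorization, hmarks]
  · rw [FreeGroup.MarkedWord.prod_factorization, hM, hword, FreeGroup.mk_toWord]
    group
  · have hbound := FreeGroup.MarkedWord.two_mul_norm_le hM hq
    have hnorm : FreeGroup.norm w = (FreeGroup.MarkedWord.word M).length := by rw [hword]; rfl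
    rw [hnorm, ← FreeGroup.MarkedWord.length_unmarked_add_length_marks,
      FreeGroup.MarkedWord.length_factorization]
    omega
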